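/- arXiv:2409.03664 — 2 statements merged into one kernel-verified Lean document; each statement's English description precedes it below -/
import Mathlib

section
/- Let x₁,…,x_m and y₁,…,y_m be points in ℝⁿ with ⟨x_i - x_j, y_i - y_j⟩ ≥ 0 for all i, j. Then for every x ∈ ℝⁿ there exists y ∈ ℝⁿ such that ⟨x - x_i, y - y_i⟩ ≥ 0 for all i = 1,…,m. -/
/-!
Put `M i j = ⟪x i - p, y j - y i⟫`. Monotonicity of the data says exactly that `M + Mᵀ ≤ 0`
entrywise, so `μ ⬝ᵥ M *ᵥ μ ≤ 0` for every probability vector `μ`. By von Neumann's minimax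
theorem the game with payoff `μ ⬝ᵥ M *ᵥ λ` has a saddle point on the simplex, whose value is
then `≤ 0`; its minimising strategy `λ` satisfies `M *ᵥ λ ≤ 0`, and `q = ∑ j, λ j • y j` works
because `⟪p - x i, q - y i⟫ = -(M *ᵥ λ) i`.
-/

open scoped RealInnerProductSpace

namespace Matrix

variable {ι κ : Type*} [Fintype ι] [Fintype κ]

theorem exists_isSaddlePointOn_stdSimplex [Nonempty ι] [Nonempty κ] (M : Matrix ι κ ℝ) :
    ∃ a ∈ stdSimplex ℝ κ, ∃ b ∈ stdSimplex ℝ ι,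
      IsSaddlePointOn (stdSimplex ℝ κ) (stdSimplex ℝ ι) (fun l μ ↦ μ ⬝ᵥ M *ᵥ l) a b := by
  classical
  set B : (ι → ℝ) →ₗ[ℝ] (κ → ℝ) →ₗ[ℝ] ℝ := toLinearMap₂' ℝ M
  have hB (l : κ → ℝ) (μ : ι → ℝ) : μ ⬝ᵥ M *ᵥ l = B μ l := (toLinearMap₂'_apply' M μ l).symm
  simp only [hB]
  exact Sion.exists_isSaddlePointOn (isPathConnected_stdSimplex κ).nonempty
    (convex_stdSimplex ℝ κ) (isCompact_stdSimplex ℝ κ)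
    (fun μ _ ↦ (B μ).continuous_of_finiteDimensional.lowerSemicontinuous.lowerSemicontinuousOn _)
    (fun μ _ ↦ ((B μ).convexOn (convex_stdSimplex ℝ κ)).quasiconvexOn)
    (convex_stdSimplex ℝ ι) (isPathConnected_stdSimplex ι).nonempty (isCompact_stdSimplex ℝ ι)
    (fun l _ ↦ (B.flip l).continuous_of_finiteDimensional.upperSemicontinuous.upperSemicontinuousOn _)
    (fun l _ ↦ ((B.flip l).concaveOn (convex_stdSimplex ℝ ι)).quasiconcaveOn)

theorem exists_mem_stdSimplex_mulVec_nonpos [Nonempty ι] (M : Matrix ι ι ℝ)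
    (hM : ∀ μ ∈ stdSimplex ℝ ι, μ ⬝ᵥ M *ᵥ μ ≤ 0) :
    ∃ l ∈ stdSimplex ℝ ι, M *ᵥ l ≤ 0 := by
  classical
  obtain ⟨a, ha, b, hb, hab⟩ := exists_isSaddlePointOn_stdSimplex M
  refine ⟨a, ha, fun i ↦ ?_⟩
  calc (M *ᵥ a) i = Pi.single i 1 ⬝ᵥ M *ᵥ a := by simp
    _ ≤ b ⬝ᵥ M *ᵥ b := hab b hb _ (single_mem_stdSimplex ℝ i)
    _ ≤ 0 := hM b hb

theorem dotProduct_mulVec_self_nonpos {M : Matrix ι ι ℝ} (hM : ∀ i j, M i j + M j i ≤ 0)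
    {μ : ι → ℝ} (hμ : 0 ≤ μ) : μ ⬝ᵥ M *ᵥ μ ≤ 0 := by
  have hsymm : 2 * (μ ⬝ᵥ M *ᵥ μ) = μ ⬝ᵥ (M + Mᵀ) *ᵥ μ := by
    rw [add_mulVec, dotProduct_add, mulVec_transpose, dotProduct_mulVec μ M μ, dotProduct_comm]
    ring
  have hsum : μ ⬝ᵥ (M + Mᵀ) *ᵥ μ ≤ 0 := by
    simp only [dotProduct, mulVec, Finset.mul_sum]
    exact Finset.sum_nonpos fun i _ ↦ Finset.sum_nonpos fun j _ ↦
      mul_nonpos_of_nonneg_of_nonpos (hμ i) (mul_nonpos_of_nonpos_of_nonneg (hM i j) (hμ j))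
  linarith

end Matrix

theorem sum_smul_sub_of_sum_eq_one {ι R E : Type*} [Fintype ι] [Ring R] [AddCommGroup E]
    [Module R E] {l : ι → R} (hl : ∑ j, l j = 1) (y : ι → E) (z : E) :
    ∑ j, l j • y j - z = ∑ j, l j • (y j - z) := by
  simp only [smul_sub, Finset.sum_sub_distrib, ← Finset.sum_smul, hl, one_smul]

open Matrix in
theorem exists_forall_inner_sub_nonneg {E ι : Type*} [NormedAddCommGroup E]
    [InnerProductSpace ℝ E] [Fintype ι] (x y : ι → E) (h : ∀ i j, 0 ≤ ⟪x i - x j, y i - y j⟫)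
    (p : E) : ∃ q, ∀ i, 0 ≤ ⟪p - x i, q - y i⟫ := by
  cases isEmpty_or_nonempty ι
  · exact ⟨0, isEmptyElim⟩
  let M : Matrix ι ι ℝ := of fun i j ↦ ⟪x i - p, y j - y i⟫
  have hM (i j : ι) : M i j + M j i ≤ 0 := by
    have : M i j + M j i = -⟪x i - x j, y i - y j⟫ := by
      simp only [M, of_apply, inner_sub_left, inner_sub_right]
      ring
    linarith [h i j]
  obtain ⟨l, hl, hMl⟩ := M.exists_mem_stdSimplex_mulVec_nonpos
    fun μ hμ ↦ dotProduct_mulVec_self_nonpos hM hμ.1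
  refine ⟨∑ j, l j • y j, fun i ↦ ?_⟩
  have hinner : ⟪p - x i, ∑ j, l j • y j - y i⟫ = -(M *ᵥ l) i := by
    rw [sum_smul_sub_of_sum_eq_one hl.2, inner_sum, mulVec, dotProduct,
      ← Finset.sum_neg_distrib]
    refine Finset.sum_congr rfl fun j _ ↦ ?_
    rw [real_inner_smul_right, ← neg_sub, inner_neg_left]
    simp only [M, of_apply]
    ring
  rw [hinner]
  exact neg_nonneg.mpr (hMl i)

theorem minty_extension {n m : ℕ}
    (x y : Fin m → EuclideanSpace ℝ (Fin n))
    (h : ∀ i j, 0 ≤ ⟪x i - x j, y i - y j⟫) :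
    ∀ p : EuclideanSpace ℝ (Fin n), ∃ q : EuclideanSpace ℝ (Fin n),
      ∀ i, 0 ≤ ⟪p - x i, q - y i⟫ :=
  exists_forall_inner_sub_nonneg x y h
end

section
/- Let T : ℝⁿ → ℝⁿ be 1-Lipschitz. Define S_t : ℝⁿ → ℝ²ⁿ by S_t(x) = ((x+T(x))/2 + cos(πt)·(x−T(x))/2, sin(πt)·(x−T(x))/2). Then for all x, y ∈ ℝⁿ, the function t ↦ ‖S_t(x) − S_t(y)‖₂ is monotonically decreasing on [0,1]; moreover S_0(x) = (x,0) and S_1(x) = (T(x),0). -/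
open MeasureTheory Real Set
noncomputable section

/-- The Bezdek--Connelly trajectories in doubled dimension. -/
def BCtraj {n : ℕ} (T : EuclideanSpace ℝ (Fin n) → EuclideanSpace ℝ (Fin n))
    (t : ℝ) (x : EuclideanSpace ℝ (Fin n)) :
    WithLp 2 (EuclideanSpace ℝ (Fin n) × EuclideanSpace ℝ (Fin n)) :=
  (WithLp.equiv 2 (EuclideanSpace ℝ (Fin n) × EuclideanSpace ℝ (Fin n))).symm
    ((2:ℝ)⁻¹ • (x + T x) + (Real.cos (π * t) * (2:ℝ)⁻¹) • (x - T x),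
     (Real.sin (π * t) * (2:ℝ)⁻¹) • (x - T x))

/-!
Put `u = x - y`, `v = T x - T y`, `a = (u + v) / 2`, `b = (u - v) / 2`. Then
`S_t x - S_t y = (a + cos (π t) • b, sin (π t) • b)`, whose squared norm is
`‖a‖² + ‖b‖² + 2 cos (π t) ⟪a, b⟫`. Since `⟪a, b⟫ = (‖u‖² - ‖v‖²) / 4 ≥ 0` when `T` is
1-Lipschitz and `cos` decreases on `[0, π]`, the distance decreases in `t`.
-/

section

variable {E : Type*} [NormedAddCommGroup E] [InnerProductSpace ℝ E]

lemma norm_sq_toLp_add_cos_smul_sin_smul (a b : E) (θ : ℝ) :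
    ‖WithLp.toLp 2 (a + cos θ • b, sin θ • b)‖ ^ 2 =
      ‖a‖ ^ 2 + ‖b‖ ^ 2 + 2 * cos θ * inner ℝ a b := by
  rw [WithLp.prod_norm_sq_eq_of_L2, WithLp.toLp_fst, WithLp.toLp_snd, norm_add_sq_real,
    real_inner_smul_right, norm_smul, norm_smul, Real.norm_eq_abs, Real.norm_eq_abs, mul_pow,
    mul_pow, sq_abs, sq_abs]
  linear_combination ‖b‖ ^ 2 * sin_sq_add_cos_sq θ

lemma real_inner_half_add_half_sub (u v : E) :
    inner ℝ ((2:ℝ)⁻¹ • (u + v)) ((2:ℝ)⁻¹ • (u - v)) = (‖u‖ ^ 2 - ‖v‖ ^ 2) / 4 := by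
  rw [real_inner_smul_left, real_inner_smul_right, inner_add_left, inner_sub_right,
    inner_sub_right, real_inner_self_eq_norm_sq, real_inner_self_eq_norm_sq, real_inner_comm u v]
  ring

end

section

variable {n : ℕ} (T : EuclideanSpace ℝ (Fin n) → EuclideanSpace ℝ (Fin n))

lemma BCtraj_sub (t : ℝ) (x y : EuclideanSpace ℝ (Fin n)) :
    BCtraj T t x - BCtraj T t y =
      WithLp.toLp 2
        ((2:ℝ)⁻¹ • ((x - y) + (T x - T y)) + cos (π * t) • (2:ℝ)⁻¹ • ((x - y) - (T x - T y)),
         sin (π * t) • (2:ℝ)⁻¹ • ((x - y) - (T x - T y))) := by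
  simp only [BCtraj, WithLp.equiv_symm_apply, ← WithLp.toLp_sub, Prod.mk_sub_mk]
  congr 2 <;> module

lemma norm_BCtraj_sub_sq (t : ℝ) (x y : EuclideanSpace ℝ (Fin n)) :
    ‖BCtraj T t x - BCtraj T t y‖ ^ 2 =
      ‖(2:ℝ)⁻¹ • ((x - y) + (T x - T y))‖ ^ 2 + ‖(2:ℝ)⁻¹ • ((x - y) - (T x - T y))‖ ^ 2 +
        cos (π * t) * (‖x - y‖ ^ 2 - ‖T x - T y‖ ^ 2) / 2 := by
  rw [BCtraj_sub, norm_sq_toLp_add_cos_smul_sin_smul, real_inner_half_add_half_sub]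
  ring

lemma antitoneOn_cos_pi_mul : AntitoneOn (fun t => cos (π * t)) (Icc 0 1) := by
  intro s hs t ht hst
  apply antitoneOn_cos
  · exact ⟨by nlinarith [pi_pos, hs.1], by nlinarith [pi_pos, hs.2]⟩
  · exact ⟨by nlinarith [pi_pos, ht.1], by nlinarith [pi_pos, ht.2]⟩
  · nlinarith [pi_pos]

lemma antitoneOn_norm_BCtraj_sub {x y : EuclideanSpace ℝ (Fin n)}
    (hxy : ‖T x - T y‖ ≤ ‖x - y‖) :
    AntitoneOn (fun t => ‖BCtraj T t x - BCtraj T t y‖) (Icc 0 1) := by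
  intro s hs t ht hst
  have hcoef : 0 ≤ ‖x - y‖ ^ 2 - ‖T x - T y‖ ^ 2 := by
    nlinarith [norm_nonneg (T x - T y)]
  have hsq : ‖BCtraj T t x - BCtraj T t y‖ ^ 2 ≤ ‖BCtraj T s x - BCtraj T s y‖ ^ 2 := by
    rw [norm_BCtraj_sub_sq, norm_BCtraj_sub_sq]
    nlinarith [antitoneOn_cos_pi_mul hs ht hst]
  exact pow_le_pow_iff_left₀ (norm_nonneg _) (norm_nonneg _) two_ne_zero |>.mp hsq

lemma BCtraj_zero (x : EuclideanSpace ℝ (Fin n)) :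
    BCtraj T 0 x = WithLp.toLp 2 (x, 0) := by
  simp only [BCtraj, mul_zero, cos_zero, sin_zero, zero_mul, zero_smul, WithLp.equiv_symm_apply]
  congr 2
  module

lemma BCtraj_one (x : EuclideanSpace ℝ (Fin n)) :
    BCtraj T 1 x = WithLp.toLp 2 (T x, 0) := by
  simp only [BCtraj, mul_one, cos_pi, sin_pi, zero_mul, zero_smul, WithLp.equiv_symm_apply]
  congr 2
  module

end

theorem bezdek_connelly_contraction {n : ℕ}
    (T : EuclideanSpace ℝ (Fin n) → EuclideanSpace ℝ (Fin n))
    (hT : LipschitzWith 1 T) :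
    (∀ x y, AntitoneOn (fun t => ‖BCtraj T t x - BCtraj T t y‖) (Set.Icc (0:ℝ) 1)) ∧
    (∀ x, BCtraj T 0 x =
      (WithLp.equiv 2 (EuclideanSpace ℝ (Fin n) × EuclideanSpace ℝ (Fin n))).symm (x, 0)) ∧
    (∀ x, BCtraj T 1 x =
      (WithLp.equiv 2 (EuclideanSpace ℝ (Fin n) × EuclideanSpace ℝ (Fin n))).symm (T x, 0)) :=
  ⟨fun x y => antitoneOn_norm_BCtraj_sub T (by simpa using hT.norm_sub_le x y),
    BCtraj_zero T, BCtraj_one T⟩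
end
end
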